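/- Let A be a nonnegative bounded linear operator on L²(X) with A^r = A (r ≥ 2) and kernel containing no nonzero nonnegative function. Suppose e_r, e_s ∈ R(A) are nonnegative with all three sets Supp e_r ∩ Supp e_s, Supp e_r \ Supp e_s, Supp e_s \ Supp e_r of positive measure, and the restrictions of e_r, e_s to Supp e_r ∩ Supp e_s are linearly independent. Then there exist four nonzero nonnegative functions in R(A) with pairwise essentially disjoint supports. -/

import Mathlib

/-!
Since `A ^ r = A`, the operator `P = A ^ (r - 1)` is a positive projection onto `R(A)` with
`A P = A`. For `w ∈ R(A)` we get `P w⁺ ≥ P w = w` and `P w⁺ ≥ 0`, so `P w⁺ - w⁺` is a nonnegative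
element of `Ker A`, hence zero: `R(A)` is a vector sublattice.

Linear independence of `e_r, e_s` on the common support says that the ratio `e_r / e_s` is not
a.e. constant there, which yields thresholds `0 < a ≤ b ≤ c` such that both bands
`{a e_s < e_r < b e_s}` and `{b e_s < e_r < c e_s}` have positive measure. The lattice expressions
`(e_r - c e_s)⁺`, `(e_r - b e_s)⁺ ⊓ (e_r - c e_s)⁻`, `(e_r - a e_s)⁺ ⊓ (e_r - b e_s)⁻` and
`(e_r - a e_s)⁻` then lie in `R(A)` and are supported on the disjoint sets
`{e_r > c e_s} ⊇ Supp e_r \ Supp e_s`, the two bands, and `{e_r < a e_s} ⊇ Supp e_s \ Supp e_r`.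
-/

open MeasureTheory Function

theorem Module.End.pow_apply_nonneg {R E : Type*} [Semiring R] [AddCommMonoid E] [Preorder E]
    [Module R E] {A : Module.End R E} (hpos : ∀ f, 0 ≤ f → 0 ≤ A f) (n : ℕ) {f : E}
    (hf : 0 ≤ f) : 0 ≤ (A ^ n) f := by
  induction n with
  | zero => simpa using hf
  | succ n ih => rw [pow_succ', Module.End.mul_apply]; exact hpos _ ih

theorem Module.End.posPart_mem_range {R E : Type*} [Ring R] [AddCommGroup E] [Lattice E]
    [IsOrderedAddMonoid E] [Module R E] {A : Module.End R E} (hpos : ∀ f, 0 ≤ f → 0 ≤ A f)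
    {r : ℕ} (hr : 2 ≤ r) (hpot : A ^ r = A) (hker : ∀ h, A h = 0 → 0 ≤ h → h = 0) {w : E}
    (hw : w ∈ LinearMap.range A) : w⁺ ∈ LinearMap.range A := by
  obtain ⟨k, rfl⟩ : ∃ k, r = k + 2 := ⟨r - 2, by omega⟩
  obtain ⟨v, rfl⟩ := hw
  set P := A ^ (k + 1)
  have hPA : P (A v) = A v := by rw [← Module.End.mul_apply, ← pow_succ, hpot]
  have hle : (A v)⁺ ≤ P (A v)⁺ := by
    refine sup_le ?_ (pow_apply_nonneg hpos _ (posPart_nonneg _))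
    have := pow_apply_nonneg hpos (k + 1) (sub_nonneg.2 (le_posPart (A v)))
    rwa [map_sub, sub_nonneg, hPA] at this
  have hfix : P (A v)⁺ = (A v)⁺ := by
    have hAP : A (P (A v)⁺ - (A v)⁺) = 0 := by
      rw [map_sub, ← Module.End.mul_apply, ← pow_succ', hpot, sub_self]
    exact sub_eq_zero.1 (hker _ hAP (sub_nonneg.2 hle))
  exact ⟨(A ^ k) (A v)⁺, by rw [← Module.End.mul_apply, ← pow_succ']; exact hfix⟩

instance MeasureTheory.Lp.instPosSMulMono {X : Type*} [MeasurableSpace X] {μ : Measure X}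
    {p : ENNReal} : PosSMulMono ℝ (Lp ℝ p μ) where
  smul_le_smul_of_nonneg_left c hc f g hfg := by
    rw [← Lp.coeFn_le] at hfg ⊢
    filter_upwards [Lp.coeFn_smul c f, Lp.coeFn_smul c g, hfg] with x hf hg hx
    rw [hf, hg]
    exact mul_le_mul_of_nonneg_left hx hc

theorem inf_le_zero_of_le_posPart_of_le_negPart {E : Type*} [AddCommGroup E] [Lattice E]
    [IsOrderedAddMonoid E] {u v w : E} (hu : u ≤ w⁺) (hv : v ≤ w⁻) : u ⊓ v ≤ 0 :=
  (inf_le_inf hu hv).trans (posPart_inf_negPart_eq_zero w).le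

section RatioBands

variable {E : Type*} [AddCommGroup E] [Lattice E] [Module ℝ E]

def ratioBands (u v : E) (a b c : ℝ) : Fin 4 → E :=
  ![(u - c • v)⁺, (u - b • v)⁺ ⊓ (u - c • v)⁻, (u - a • v)⁺ ⊓ (u - b • v)⁻, (u - a • v)⁻]

variable {u v : E} {a b c : ℝ}

theorem ratioBands_nonneg (i : Fin 4) : 0 ≤ ratioBands u v a b c i := by
  fin_cases i <;> simp [ratioBands]

theorem ratioBands_mem [IsOrderedAddMonoid E] (S : Submodule ℝ E) (hS : ∀ w ∈ S, w⁺ ∈ S)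
    (hu : u ∈ S) (hv : v ∈ S) (i : Fin 4) : ratioBands u v a b c i ∈ S := by
  have hw : ∀ p : ℝ, u - p • v ∈ S := fun p => S.sub_mem hu (S.smul_mem p hv)
  have hneg : ∀ w ∈ S, w⁻ ∈ S := fun w hw => by simpa using hS _ (S.neg_mem hw)
  have hinf : ∀ w ∈ S, ∀ w' ∈ S, w ⊓ w' ∈ S := fun w hw w' hw' => by
    rw [inf_eq_sub_posPart_sub]
    exact S.sub_mem hw (hS _ (S.sub_mem hw hw'))
  fin_cases i
  exacts [hS _ (hw c), hinf _ (hS _ (hw b)) _ (hneg _ (hw c)),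
    hinf _ (hS _ (hw a)) _ (hneg _ (hw b)), hneg _ (hw a)]

theorem ratioBands_inf_eq_zero [IsOrderedAddMonoid E] [PosSMulMono ℝ E] (hv : 0 ≤ v)
    (hab : a ≤ b) (hbc : b ≤ c) {i j : Fin 4} (hij : i ≠ j) :
    ratioBands u v a b c i ⊓ ratioBands u v a b c j = 0 := by
  wlog h : i < j generalizing i j
  · rw [inf_comm]
    exact this hij.symm (hij.lt_or_gt.resolve_left h)
  have hw : ∀ {p q : ℝ}, p ≤ q → u - q • v ≤ u - p • v := fun hpq =>
    sub_le_sub_left (smul_le_smul_of_nonneg_right hpq hv) u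
  refine le_antisymm ?_ (le_inf (ratioBands_nonneg i) (ratioBands_nonneg j))
  fin_cases i <;> fin_cases j <;> try exact absurd h (by decide)
  exacts [inf_le_zero_of_le_posPart_of_le_negPart le_rfl inf_le_right,
    inf_le_zero_of_le_posPart_of_le_negPart le_rfl (inf_le_right.trans (negPart_anti (hw hbc))),
    inf_le_zero_of_le_posPart_of_le_negPart le_rfl (negPart_anti (hw (hab.trans hbc))),
    inf_le_zero_of_le_posPart_of_le_negPart inf_le_left inf_le_right,
    inf_le_zero_of_le_posPart_of_le_negPart (inf_le_left.trans (posPart_mono (hw hab))) le_rfl,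
    inf_le_zero_of_le_posPart_of_le_negPart inf_le_left le_rfl]

end RatioBands

namespace MeasureTheory.Lp

variable {X : Type*} [MeasurableSpace X] {μ : Measure X} {p : ENNReal}

theorem ne_zero_of_ae_ne_zero_on {F : Type*} [NormedAddCommGroup F] {f : Lp F p μ} {T : Set X}
    (hT : 0 < μ T) (hf : ∀ᵐ x ∂μ, x ∈ T → f x ≠ 0) : f ≠ 0 := by
  rintro rfl
  refine hT.ne' (measure_eq_zero_iff_ae_notMem.2 ?_)
  filter_upwards [hf, coeFn_zero F p μ] with x hx h0 hxT
  exact hx hxT h0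

theorem measure_support_inter_eq_zero_of_inf_eq_zero {f g : Lp ℝ p μ} (hf : 0 ≤ f) (hg : 0 ≤ g)
    (h : f ⊓ g = 0) : μ (support f ∩ support g) = 0 := by
  rw [measure_eq_zero_iff_ae_notMem]
  filter_upwards [coeFn_inf f g, (coeFn_nonneg f).2 hf, (coeFn_nonneg g).2 hg,
    h ▸ coeFn_zero ℝ p μ] with x hinf hfx hgx h0
  rintro ⟨hfx', hgx'⟩
  have : min (f x) (g x) = 0 := by simpa using hinf.symm.trans h0
  rcases min_eq_iff.1 this with h' | h'
  exacts [hfx' h'.1, hgx' h'.1]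

theorem coeFn_posPart_negPart_sub_smul (f g : Lp ℝ p μ) (c : ℝ) :
    ∀ᵐ x ∂μ, (f - c • g)⁺ x = (f x - c * g x)⁺ ∧ (f - c • g)⁻ x = (f x - c * g x)⁻ := by
  filter_upwards [coeFn_sup (f - c • g) 0, coeFn_sup (-(f - c • g)) 0, coeFn_neg (f - c • g),
    coeFn_sub f (c • g), coeFn_smul c g, coeFn_zero ℝ p μ] with x h1 h2 h3 h4 h5 h0
  simp only [Pi.sup_apply, Pi.neg_apply, Pi.sub_apply, Pi.smul_apply, smul_eq_mul] at h1 h2 h3 h4 h5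
  rw [posPart_def, negPart_def, h1, h2, h3, h4, h5, h0]
  exact ⟨rfl, rfl⟩

theorem ratioBands_ne_zero {u v : Lp ℝ p μ} {a b c : ℝ} (hu : 0 ≤ u) (hv : 0 ≤ v) (ha : 0 < a)
    (hhigh : 0 < μ (support u \ support v)) (hbc : 0 < μ {x | b * v x < u x ∧ u x < c * v x})
    (hab : 0 < μ {x | a * v x < u x ∧ u x < b * v x}) (hlow : 0 < μ (support v \ support u))
    (i : Fin 4) : ratioBands u v a b c i ≠ 0 := by
  have hband : ∀ {p q : ℝ}, 0 < μ {x | p * v x < u x ∧ u x < q * v x} →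
      (u - p • v)⁺ ⊓ (u - q • v)⁻ ≠ 0 := fun {p q} h => by
    refine ne_zero_of_ae_ne_zero_on h ?_
    filter_upwards [coeFn_inf (u - p • v)⁺ (u - q • v)⁻, coeFn_posPart_negPart_sub_smul u v p,
      coeFn_posPart_negPart_sub_smul u v q] with x hx hp hq ⟨hpx, hqx⟩
    rw [hx, Pi.inf_apply, hp.1, hq.2]
    exact (lt_min (posPart_pos_iff.2 (sub_pos.2 hpx)) (negPart_pos_iff.2 (sub_neg.2 hqx))).ne'
  fin_cases i
  · change (u - c • v)⁺ ≠ 0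
    refine ne_zero_of_ae_ne_zero_on hhigh ?_
    filter_upwards [coeFn_posPart_negPart_sub_smul u v c, (coeFn_nonneg u).2 hu]
      with x hx hux ⟨hux0, hvx0⟩
    rw [hx.1, notMem_support.1 hvx0, mul_zero, sub_zero]
    exact (posPart_pos_iff.2 (hux.lt_of_ne' hux0)).ne'
  · exact hband hbc
  · exact hband hab
  · change (u - a • v)⁻ ≠ 0
    refine ne_zero_of_ae_ne_zero_on hlow ?_
    filter_upwards [coeFn_posPart_negPart_sub_smul u v a, (coeFn_nonneg v).2 hv]
      with x hx hvx ⟨hvx0, hux0⟩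
    rw [hx.2, notMem_support.1 hux0, zero_sub]
    exact (negPart_pos_iff.2 (neg_neg_of_pos (mul_pos ha (hvx.lt_of_ne' hvx0)))).ne'

end MeasureTheory.Lp

section RatioDistribution

variable {X : Type*} [MeasurableSpace X] {μ : Measure X}

theorem exists_measure_lt_pos_and_measure_gt_pos (ρ : X → ℝ) (h : ∀ t, 0 < μ {x | ρ x ≠ t}) :
    ∃ t, 0 < μ {x | ρ x < t} ∧ 0 < μ {x | t < ρ x} := by
  classical
  by_contra! H
  -- `B q` is whichever of `{ρ < q}`, `{q < ρ}` is null; off `⋃ q, B q`, `ρ` is constant.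
  let B : ℚ → Set X := fun q => if μ {x | ρ x < q} = 0 then {x | ρ x < q} else {x | q < ρ x}
  have hB : ∀ q, μ (B q) = 0 := fun q => by
    by_cases hq : μ {x | ρ x < q} = 0
    · simp [B, hq]
    · simpa [B, hq] using H q (pos_iff_ne_zero.2 hq)
  have hN : μ (⋃ q, B q) = 0 := measure_iUnion_null hB
  obtain ⟨x, hx⟩ : (⋃ q, B q)ᶜ.Nonempty := by
    refine Set.nonempty_compl.2 fun huniv => (h 0).ne' (measure_mono_null ?_ hN)
    rw [huniv]; exact Set.subset_univ _
  refine (h (ρ x)).ne' (measure_mono_null (fun y hy => ?_) hN)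
  rcases lt_or_gt_of_ne hy with hlt | hgt
  · obtain ⟨q, hyq, hqx⟩ := exists_rat_btwn hlt
    refine Set.mem_iUnion.2 ⟨q, ?_⟩
    by_cases hq : μ {x | ρ x < q} = 0
    · simpa [B, hq] using hyq
    · exact absurd (Set.mem_iUnion.2 ⟨q, by simpa [B, hq] using hqx⟩) hx
  · obtain ⟨q, hxq, hqy⟩ := exists_rat_btwn hgt
    refine Set.mem_iUnion.2 ⟨q, ?_⟩
    by_cases hq : μ {x | ρ x < q} = 0
    · exact absurd (Set.mem_iUnion.2 ⟨q, by simpa [B, hq] using hxq⟩) hx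
    · simpa [B, hq] using hqy

theorem exists_ratio_bands {e s : X → ℝ} (he : Measurable e) (hs : Measurable s)
    (h : ∀ t : ℝ, 0 < μ {x | 0 < e x ∧ 0 < s x ∧ e x ≠ t * s x}) :
    ∃ a b c : ℝ, 0 < a ∧ a ≤ b ∧ b ≤ c ∧ 0 < μ {x | a * s x < e x ∧ e x < b * s x} ∧
      0 < μ {x | b * s x < e x ∧ e x < c * s x} := by
  set D := {x | 0 < e x ∧ 0 < s x}
  have hD : MeasurableSet D :=
    (measurableSet_lt measurable_const he).inter (measurableSet_lt measurable_const hs)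
  obtain ⟨t, hlt, hgt⟩ := exists_measure_lt_pos_and_measure_gt_pos (μ := μ.restrict D)
    (fun x => e x / s x) fun t => by
      rw [Measure.restrict_apply' hD]
      refine (h t).trans_le (measure_mono ?_)
      rintro x ⟨hex, hsx, hne⟩
      exact ⟨fun heq => hne ((div_eq_iff hsx.ne').1 heq), hex, hsx⟩
  rw [Measure.restrict_apply' hD] at hlt hgt
  obtain ⟨x, hxt : e x / s x < t, hex, hsx⟩ := nonempty_of_measure_ne_zero hlt.ne'
  have ht : 0 < t := (div_pos hex hsx).trans hxt
  have hlow : {x | e x / s x < t} ∩ D ⊆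
      ⋃ n : ℕ, {x | t / (n + 1) * s x < e x ∧ e x < t * s x} := by
    rintro x ⟨hxt : e x / s x < t, hex, hsx⟩
    obtain ⟨n, hn⟩ := exists_nat_gt (t / (e x / s x))
    refine Set.mem_iUnion.2 ⟨n, ?_, (div_lt_iff₀ hsx).1 hxt⟩
    rw [div_div_eq_mul_div, div_lt_iff₀ hex] at hn
    rw [div_mul_eq_mul_div, div_lt_iff₀ (by positivity)]
    linarith
  have hhigh : {x | t < e x / s x} ∩ D ⊆
      ⋃ m : ℕ, {x | t * s x < e x ∧ e x < (t + m) * s x} := by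
    rintro x ⟨hxt : t < e x / s x, hex, hsx⟩
    obtain ⟨m, hm⟩ := exists_nat_gt (e x / s x - t)
    exact Set.mem_iUnion.2 ⟨m, (lt_div_iff₀ hsx).1 hxt, (div_lt_iff₀ hsx).1 (by linarith)⟩
  obtain ⟨n, hn⟩ :=
    exists_measure_pos_of_not_measure_iUnion_null (measure_pos_of_superset hlow hlt.ne').ne'
  obtain ⟨m, hm⟩ :=
    exists_measure_pos_of_not_measure_iUnion_null (measure_pos_of_superset hhigh hgt.ne').ne'
  exact ⟨t / (n + 1), t, t + m, by positivity, div_le_self ht.le (by linarith),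
    by linarith [m.cast_nonneg (α := ℝ)], hn, hm⟩

theorem measure_pos_of_indicator_independent {e s : X → ℝ} (he : 0 ≤ᵐ[μ] e) (hs : 0 ≤ᵐ[μ] s)
    (hindep : ∀ α β : ℝ, (fun x => α * (support e ∩ support s).indicator e x
        + β * (support e ∩ support s).indicator s x) =ᵐ[μ] 0 → α = 0 ∧ β = 0) (t : ℝ) :
    0 < μ {x | 0 < e x ∧ 0 < s x ∧ e x ≠ t * s x} := by
  refine pos_iff_ne_zero.2 fun h0 => one_ne_zero (hindep 1 (-t) ?_).1
  filter_upwards [measure_eq_zero_iff_ae_notMem.1 h0, he, hs] with x hx hex hsx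
  by_cases hxD : x ∈ support e ∩ support s
  · have hprop : e x = t * s x :=
      not_not.1 fun hne => hx ⟨hex.lt_of_ne' hxD.1, hsx.lt_of_ne' hxD.2, hne⟩
    simp [Set.indicator_of_mem hxD, hprop]
  · simp [Set.indicator_of_notMem hxD]

end RatioDistribution

theorem stmt12_general {X : Type*} [MeasurableSpace X] (μ : Measure X)
    (A : Lp ℝ 2 μ →L[ℝ] Lp ℝ 2 μ)
    (hpos : ∀ f : Lp ℝ 2 μ, 0 ≤ f → 0 ≤ A f)
    (r : ℕ) (hr : 2 ≤ r) (hpot : A ^ r = A)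
    (hker : ∀ h : Lp ℝ 2 μ, A h = 0 → 0 ≤ h → h = 0)
    (er es : Lp ℝ 2 μ) (her : er ∈ Set.range A) (hes : es ∈ Set.range A)
    (her0 : 0 ≤ er) (hes0 : 0 ≤ es)
    (hrs : 0 < μ (Function.support (er : X → ℝ) \ Function.support (es : X → ℝ)))
    (hsr : 0 < μ (Function.support (es : X → ℝ) \ Function.support (er : X → ℝ)))
    (hindep : ∀ α β : ℝ,
      (fun x => α * (Function.support (er : X → ℝ) ∩
          Function.support (es : X → ℝ)).indicator (er : X → ℝ) x
        + β * (Function.support (er : X → ℝ) ∩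
          Function.support (es : X → ℝ)).indicator (es : X → ℝ) x) =ᵐ[μ] 0 →
      α = 0 ∧ β = 0) :
    ∃ f : Fin 4 → Lp ℝ 2 μ,
      (∀ i, f i ∈ Set.range A) ∧ (∀ i, f i ≠ 0) ∧ (∀ i, 0 ≤ f i) ∧
      ∀ i j, i ≠ j →
        μ (Function.support (f i : X → ℝ) ∩ Function.support (f j : X → ℝ)) = 0 := by
  let S := LinearMap.range (A : Lp ℝ 2 μ →ₗ[ℝ] Lp ℝ 2 μ)
  have hS : ∀ w ∈ S, w⁺ ∈ S := fun _ => Module.End.posPart_mem_range hpos hr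
    (by rw [← ContinuousLinearMap.toLinearMap_pow, hpot]) hker
  obtain ⟨a, b, c, ha, hab, hbc, hlow, hhigh⟩ :=
    exists_ratio_bands (Lp.stronglyMeasurable er).measurable (Lp.stronglyMeasurable es).measurable
      (measure_pos_of_indicator_independent ((Lp.coeFn_nonneg er).2 her0)
        ((Lp.coeFn_nonneg es).2 hes0) hindep)
  refine ⟨ratioBands er es a b c, ratioBands_mem S hS her hes,
    Lp.ratioBands_ne_zero her0 hes0 ha hrs hhigh hlow hsr, ratioBands_nonneg, fun i j hij => ?_⟩
  exact Lp.measure_support_inter_eq_zero_of_inf_eq_zero (ratioBands_nonneg i)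
    (ratioBands_nonneg j) (ratioBands_inf_eq_zero hes0 hab hbc hij)

theorem stmt12 {X : Type*} [MeasurableSpace X] (μ : Measure X) [IsFiniteMeasure μ]
    (A : Lp ℝ 2 μ →L[ℝ] Lp ℝ 2 μ)
    (hpos : ∀ f : Lp ℝ 2 μ, 0 ≤ f → 0 ≤ A f)
    (r : ℕ) (hr : 2 ≤ r) (hpot : A ^ r = A)
    (hker : ∀ h : Lp ℝ 2 μ, A h = 0 → 0 ≤ h → h = 0)
    (er es : Lp ℝ 2 μ) (her : er ∈ Set.range A) (hes : es ∈ Set.range A)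
    (her0 : 0 ≤ er) (hes0 : 0 ≤ es)
    (hcap : 0 < μ (Function.support (er : X → ℝ) ∩ Function.support (es : X → ℝ)))
    (hrs : 0 < μ (Function.support (er : X → ℝ) \ Function.support (es : X → ℝ)))
    (hsr : 0 < μ (Function.support (es : X → ℝ) \ Function.support (er : X → ℝ)))
    (hindep : ∀ α β : ℝ,
      (fun x => α * (Function.support (er : X → ℝ) ∩
          Function.support (es : X → ℝ)).indicator (er : X → ℝ) x
        + β * (Function.support (er : X → ℝ) ∩
          Function.support (es : X → ℝ)).indicator (es : X → ℝ) x) =ᵐ[μ] 0 →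
      α = 0 ∧ β = 0) :
    ∃ f : Fin 4 → Lp ℝ 2 μ,
      (∀ i, f i ∈ Set.range A) ∧ (∀ i, f i ≠ 0) ∧ (∀ i, 0 ≤ f i) ∧
      ∀ i j, i ≠ j →
        μ (Function.support (f i : X → ℝ) ∩ Function.support (f j : X → ℝ)) = 0 :=
  stmt12_general μ A hpos r hr hpot hker er es her hes her0 hes0 hrs hsr hindep
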